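/- arXiv:2405.03625 — 2 statements merged into one kernel-verified Lean document; each statement's English description precedes it below -/
import Mathlib

section
/- The total mass M_w(v,k) = Z_w(v,k)(1/b) of k-admissible strings starting with the (p-1)-suffix v of w is independent of k ≥ 0, and equals b. -/
/-!
Let `Nlt k l` count the strings of length `l` with fewer than `k` occurrences of `w = a :: v`.
A string `c :: X` has one occurrence more than `X` exactly when `c = a` and `v <+: X`; sorting the
strings of length `l + 1` whose tail has at most `k` occurrences accordingly gives
`Nlt (k+1) (l+1) + N_w(v,k,l) = b * Nlt (k+1) l`. Hence the mass `N_w(v,k,l) b^{-l}` equals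
`b (u l - u (l+1))` with `u l = Nlt (k+1) l * b^{-l}`, and the series telescopes to
`b (u 0 - lim u) = b`. The density `u` tends to `0` by induction on `k`: splitting off the last
`p = |w|` letters, `u (l+p) ≤ (1 - b^{-p}) u l + b^{-p} (density for k - 1)`, since a final block
equal to `w` adds an occurrence.
-/

open scoped BigOperators
open PowerSeries

/-- Number of (possibly overlapping) occurrences of the block `w` in `X`. -/
def occCount {α : Type*} [DecidableEq α] (w X : List α) : ℕ :=
  ((List.range X.length).filter fun i => (X.drop i).take w.length = w).length

/-- Number of strings of length `l` over `{0,…,b-1}` with exactly `k` occurrences of `w`,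
starting with `x` and ending with `y` (an empty `x` or `y` imposes no constraint). -/
def Nxy (b : ℕ) (w x y : List (Fin b)) (k l : ℕ) : ℕ :=
  Fintype.card {f : Fin l → Fin b //
    occCount w (List.ofFn f) = k ∧ x <+: List.ofFn f ∧ y <:+ List.ofFn f}

/-- The generating series `Z_w(x,k,y)(t)` as a formal power series over `ℚ`. -/
noncomputable def Zser (b : ℕ) (w x y : List (Fin b)) (k : ℕ) : PowerSeries ℚ :=
  PowerSeries.mk fun l => (Nxy b w x y k l : ℚ)

section Occurrences

variable {α : Type*} [DecidableEq α] (w : List α)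

theorem occCount_nil : occCount w [] = 0 := rfl

theorem occCount_cons (a : α) (X : List α) :
    occCount w (a :: X) = (if w <+: a :: X then 1 else 0) + occCount w X := by
  simp only [occCount, ← List.countP_eq_length_filter, List.length_cons, List.range_succ_eq_map,
    List.countP_cons, List.countP_map, Function.comp_def, List.drop_succ_cons, List.drop_zero,
    List.prefix_iff_eq_take, eq_comm (a := w)]
  split_ifs <;> simp_all [Nat.add_comm]

theorem occCount_add_occCount_le_append (X Y : List α) :
    occCount w X + occCount w Y ≤ occCount w (X ++ Y) := by
  induction X with
  | nil => simp [occCount_nil]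
  | cons a X ih =>
    have hmono : w <+: a :: X → w <+: a :: X ++ Y := fun h => h.trans (List.prefix_append _ _)
    rw [List.cons_append, occCount_cons, occCount_cons]
    split_ifs <;> simp_all <;> omega

theorem occCount_le_occCount_cons (a : α) (X : List α) : occCount w X ≤ occCount w (a :: X) :=
  (occCount_cons w a X).symm ▸ Nat.le_add_left _ _

theorem one_le_occCount_self (hw : w ≠ []) : 1 ≤ occCount w w := by
  obtain ⟨a, v, rfl⟩ := List.exists_cons_of_ne_nil hw
  simp [occCount_cons]

end Occurrences

section Tuples

variable {β : Type*} [Fintype β] (P : List β → Prop) [DecidablePred P]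

theorem card_subtype_ofFn_succ (l : ℕ) :
    Fintype.card {f : Fin (l + 1) → β // P (List.ofFn f)} =
      Fintype.card {x : β × (Fin l → β) // P (x.1 :: List.ofFn x.2)} :=
  Fintype.card_congr ((Fin.consEquiv fun _ => β).subtypeEquiv (by simp [Fin.consEquiv])).symm

theorem card_subtype_ofFn_add (l n : ℕ) :
    Fintype.card {f : Fin (l + n) → β // P (List.ofFn f)} =
      Fintype.card {x : (Fin l → β) × (Fin n → β) // P (List.ofFn x.1 ++ List.ofFn x.2)} :=
  Fintype.card_congr ((Fin.appendEquiv l n).subtypeEquiv (by simp [Fin.appendEquiv])).symm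

theorem card_subtype_ofFn_eq [DecidableEq β] (w : List β) :
    Fintype.card {t : Fin w.length → β // List.ofFn t = w} = 1 :=
  Fintype.card_eq_one_iff.2 ⟨⟨w.get, List.ofFn_get w⟩, fun t =>
    Subtype.ext (List.ofFn_injective (by rw [t.2, List.ofFn_get]))⟩

theorem card_subtype_ofFn_ne [DecidableEq β] (w : List β) :
    Fintype.card {t : Fin w.length → β // List.ofFn t ≠ w} = Fintype.card β ^ w.length - 1 := by
  rw [Fintype.card_subtype_compl, card_subtype_ofFn_eq, Fintype.card_fun, Fintype.card_fin]

end Tuples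

theorem card_subtype_prod {α β : Type*} (p : α → Prop) (q : β → Prop) [Fintype {a // p a}]
    [Fintype {b // q b}] [Fintype {x : α × β // p x.1 ∧ q x.2}] :
    Fintype.card {x : α × β // p x.1 ∧ q x.2} =
      Fintype.card {a // p a} * Fintype.card {b // q b} := by
  rw [Fintype.card_congr Equiv.subtypeProdEquivProd, Fintype.card_prod]

/-- Strict inequality makes `Nlt b w 0 = 0` the base of the induction on `k` below. -/
def Nlt (b : ℕ) (w : List (Fin b)) (k l : ℕ) : ℕ :=
  Fintype.card {f : Fin l → Fin b // occCount w (List.ofFn f) < k}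

section Counting

variable {b : ℕ} (w : List (Fin b))

theorem Nlt_zero (l : ℕ) : Nlt b w 0 l = 0 := by
  simp [Nlt]

theorem Nlt_succ_zero (k : ℕ) : Nlt b w (k + 1) 0 = 1 := by
  simp [Nlt, occCount_nil]

theorem mul_Nlt_eq_card (k l : ℕ) : b * Nlt b w k l =
    Fintype.card {x : Fin b × (Fin l → Fin b) // True ∧ occCount w (List.ofFn x.2) < k} := by
  rw [card_subtype_prod (fun _ => True) fun g => occCount w (List.ofFn g) < k,
    Fintype.card_subtype_true, Fintype.card_fin, Nlt]

theorem Nlt_length_succ_le (k l : ℕ) : Nlt b w k (l + 1) ≤ b * Nlt b w k l := by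
  rw [Nlt, card_subtype_ofFn_succ (fun X => occCount w X < k), mul_Nlt_eq_card]
  exact Fintype.card_subtype_mono _ _ fun x hx =>
    ⟨trivial, (occCount_le_occCount_cons w x.1 _).trans_lt hx⟩

theorem Nlt_succ_succ_add_Nxy (a : Fin b) (v : List (Fin b)) (k l : ℕ) :
    Nlt b (a :: v) (k + 1) (l + 1) + Nxy b (a :: v) v [] k l = b * Nlt b (a :: v) (k + 1) l := by
  let P (g : Fin l → Fin b) : Prop :=
    occCount (a :: v) (List.ofFn g) = k ∧ v <+: List.ofFn g ∧ [] <:+ List.ofFn g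
  have hsplit : ∀ x : Fin b × (Fin l → Fin b), True ∧ occCount (a :: v) (List.ofFn x.2) < k + 1 ↔
      occCount (a :: v) (x.1 :: List.ofFn x.2) < k + 1 ∨ (a = x.1 ∧ P x.2) := by
    intro x
    simp only [P, occCount_cons, List.cons_prefix_cons]
    by_cases h : a = x.1 ∧ v <+: List.ofFn x.2 <;> simp [h] <;> omega
  have hdisj : Disjoint (fun x : Fin b × (Fin l → Fin b) =>
      occCount (a :: v) (x.1 :: List.ofFn x.2) < k + 1) fun x => a = x.1 ∧ P x.2 := by
    refine Pi.disjoint_iff.2 fun ⟨c, g⟩ => Prop.disjoint_iff.2 ?_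
    rintro ⟨hlt, rfl, hk, hv, -⟩
    simp [occCount_cons, hv, hk] at hlt
  rw [mul_Nlt_eq_card, Fintype.card_congr (Equiv.subtypeEquivRight hsplit),
    Fintype.card_subtype_or_disjoint _ _ hdisj, card_subtype_prod (a = ·) P,
    Fintype.card_subtype_eq', one_mul, Nlt,
    card_subtype_ofFn_succ fun X => occCount (a :: v) X < k + 1, Nxy]

theorem Nlt_succ_add_length_le (hw : w ≠ []) (k l : ℕ) :
    Nlt b w (k + 1) (l + w.length) ≤ (b ^ w.length - 1) * Nlt b w (k + 1) l + Nlt b w k l := by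
  let P (g : Fin l → Fin b) : Prop := occCount w (List.ofFn g) < k + 1
  let Q (g : Fin l → Fin b) : Prop := occCount w (List.ofFn g) < k
  rw [Nlt, card_subtype_ofFn_add fun X => occCount w X < k + 1]
  calc _ ≤ Fintype.card {x : (Fin l → Fin b) × (Fin w.length → Fin b) //
        (P x.1 ∧ List.ofFn x.2 ≠ w) ∨ (Q x.1 ∧ List.ofFn x.2 = w)} := by
        refine Fintype.card_subtype_mono _ _ fun ⟨g, t⟩ hlt => ?_
        dsimp only at hlt
        have hsuper := occCount_add_occCount_le_append w (List.ofFn g) (List.ofFn t)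
        by_cases ht : List.ofFn t = w
        · rw [ht] at hsuper hlt
          have := one_le_occCount_self w hw
          exact Or.inr ⟨by simp only [Q]; omega, ht⟩
        · exact Or.inl ⟨by simp only [P]; omega, ht⟩
    _ ≤ _ := Fintype.card_subtype_or _ _
    _ = _ := by
      rw [card_subtype_prod P (List.ofFn · ≠ w), card_subtype_prod Q (List.ofFn · = w),
        card_subtype_ofFn_ne, card_subtype_ofFn_eq, Fintype.card_fin, Nlt, Nlt, mul_one, mul_comm]

end Counting

open Filter Topology

theorem tendsto_zero_of_antitone_of_le_mul_add {u c : ℕ → ℝ} {r : ℝ} (p : ℕ) (hu : Antitone u)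
    (hu₀ : ∀ l, 0 ≤ u l) (hr : r < 1) (hc : Tendsto c atTop (𝓝 0))
    (hle : ∀ l, u (l + p) ≤ r * u l + c l) : Tendsto u atTop (𝓝 0) := by
  have hlim : Tendsto u atTop (𝓝 (⨅ l, u l)) :=
    tendsto_atTop_ciInf hu ⟨0, Set.forall_mem_range.2 hu₀⟩
  have hinf₀ : 0 ≤ ⨅ l, u l := le_ciInf hu₀
  have hinf : ⨅ l, u l ≤ (r * ⨅ l, u l) + 0 :=
    le_of_tendsto_of_tendsto' (hlim.comp (tendsto_add_atTop_nat p)) ((hlim.const_mul r).add hc) hle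
  rwa [show ⨅ l, u l = 0 by nlinarith] at hlim

section Asymptotics

variable {b : ℕ} (w : List (Fin b))

theorem antitone_Nlt_mul_inv_pow (hb : 0 < b) (k : ℕ) :
    Antitone fun l => (Nlt b w k l : ℝ) * (b : ℝ)⁻¹ ^ l := by
  refine antitone_nat_of_succ_le fun l => ?_
  have h : (Nlt b w k (l + 1) : ℝ) ≤ b * Nlt b w k l := by
    exact_mod_cast Nlt_length_succ_le w k l
  have hb' : (b : ℝ) * (b : ℝ)⁻¹ ^ (l + 1) = (b : ℝ)⁻¹ ^ l := by
    rw [pow_succ', mul_inv_cancel_left₀ (by positivity)]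
  calc (Nlt b w k (l + 1) : ℝ) * (b : ℝ)⁻¹ ^ (l + 1)
      ≤ b * Nlt b w k l * (b : ℝ)⁻¹ ^ (l + 1) := by gcongr
    _ = Nlt b w k l * (b : ℝ)⁻¹ ^ l := by rw [mul_comm (b : ℝ), mul_assoc, hb']

theorem tendsto_Nlt_mul_inv_pow (hw : w ≠ []) (k : ℕ) :
    Tendsto (fun l => (Nlt b w k l : ℝ) * (b : ℝ)⁻¹ ^ l) atTop (𝓝 0) := by
  have hb : 0 < b := (w.head hw).pos
  set p := w.length
  set β : ℝ := (b : ℝ)⁻¹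
  have hβp : 0 < β ^ p := by positivity
  set r : ℝ := ((b ^ p - 1 : ℕ) : ℝ) * β ^ p
  have hr : r < 1 := by
    have hbβ : (b : ℝ) ^ p * β ^ p = 1 := by
      rw [← mul_pow, mul_inv_cancel₀ (by positivity), one_pow]
    simp only [r, Nat.cast_sub (Nat.one_le_pow p b hb), Nat.cast_pow, Nat.cast_one, sub_mul, hbβ,
      one_mul]
    linarith
  induction k with
  | zero => simp [Nlt_zero]
  | succ k ih =>
    refine tendsto_zero_of_antitone_of_le_mul_add p (antitone_Nlt_mul_inv_pow w hb _)
      (fun l => by positivity) hr (by simpa using ih.mul_const (β ^ p)) fun l => ?_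
    calc (Nlt b w (k + 1) (l + p) : ℝ) * β ^ (l + p)
        ≤ ((b ^ p - 1) * Nlt b w (k + 1) l + Nlt b w k l : ℕ) * β ^ (l + p) := by
          gcongr; exact Nlt_succ_add_length_le w hw k l
      _ = r * (Nlt b w (k + 1) l * β ^ l) + Nlt b w k l * β ^ l * β ^ p := by
          push_cast [r]; ring

end Asymptotics

theorem stmt6_general (b : ℕ) (w : List (Fin b)) (hw : 1 ≤ w.length) (k : ℕ) :
    ∑' l : ℕ, (Nxy b w (w.drop 1) [] k l : ℝ) * ((b : ℝ)⁻¹) ^ l = (b : ℝ) := by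
  obtain ⟨a, v, rfl⟩ := List.exists_cons_of_length_pos hw
  have hb : (b : ℝ) ≠ 0 := Nat.cast_ne_zero.2 a.pos.ne'
  set u : ℕ → ℝ := fun l => Nlt b (a :: v) (k + 1) l * (b : ℝ)⁻¹ ^ l
  have hterm : ∀ l, (Nxy b (a :: v) v [] k l : ℝ) * (b : ℝ)⁻¹ ^ l = b * (u l - u (l + 1)) := by
    intro l
    have h : (Nlt b (a :: v) (k + 1) (l + 1) + Nxy b (a :: v) v [] k l : ℝ) =
        b * Nlt b (a :: v) (k + 1) l := by exact_mod_cast Nlt_succ_succ_add_Nxy a v k l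
    have hb' : (b : ℝ) * (b : ℝ)⁻¹ ^ (l + 1) = (b : ℝ)⁻¹ ^ l := by
      rw [pow_succ', mul_inv_cancel_left₀ hb]
    linear_combination (b : ℝ)⁻¹ ^ l * h + (Nlt b (a :: v) (k + 1) (l + 1) : ℝ) * hb'
  rw [List.drop_one, List.tail_cons]
  refine HasSum.tsum_eq ((hasSum_iff_tendsto_nat_of_nonneg (fun l => by positivity) _).2 ?_)
  simp only [hterm, ← Finset.mul_sum, Finset.sum_range_sub']
  simpa [u, Nlt_succ_zero] using
    ((tendsto_Nlt_mul_inv_pow _ (List.cons_ne_nil a v) (k + 1)).const_sub 1).const_mul (b : ℝ)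

/-- The total mass `M_w(v,k) = Z_w(v,k)(1/b)` of `k`-admissible strings starting with the
`(p-1)`-suffix `v` of `w` equals `b` for every `k ≥ 0`. -/
theorem stmt6 (b : ℕ) (hb : 1 < b) (w : List (Fin b)) (hw : 1 ≤ w.length) (k : ℕ) :
    ∑' l : ℕ, (Nxy b w (w.drop 1) [] k l : ℝ) * ((b : ℝ)⁻¹) ^ l = (b : ℝ) :=
  stmt6_general b w hw k
end

section
/- The generating series of w-avoiding strings satisfies the Guibas–Odlyzko formula Z_w(0)(t) = A_w(t) / ((1 - bt) A_w(t) + t^p), where A_w is the autocorrelation polynomial of w. -/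
open scoped BigOperators
open PowerSeries

/-- The autocorrelation power series (polynomial) `A_w = Σ_{0≤i<p} c_i t^i`, where
`c_i = 1` iff the length-`(p-i)` prefix of `w` equals its length-`(p-i)` suffix. -/
noncomputable def Aw (b : ℕ) (w : List (Fin b)) : PowerSeries ℚ :=
  ∑ i ∈ Finset.range w.length,
    if w.take (w.length - i) = w.drop i then (X : PowerSeries ℚ) ^ i else 0

/-!
Let `S` count the words avoiding `w` and `T` the words whose only occurrence of `w` is at
their end. A letter appended to an avoiding word of length `l` gives a word of length `l + 1`
that either still avoids `w` or has its first occurrence at the end, so `S + T = 1 + b t S`.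
Cutting `u ++ w`, for `u` avoiding `w`, right after the first occurrence of `w` writes it as
`x ++ (the last i letters of w)` with `x` counted by `T`; this occurrence overlaps the final copy
of `w` in `p - i` letters, so `i` is a period of `w`, and the decomposition is a bijection. Hence
`t^p S = A_w T`, and eliminating `T` gives `((1 - b t) A_w + t^p) S = A_w`.
-/

open Finset

section Occurrences

variable {α : Type*} {w : List α}

def EndsWithFirstOccurrence (w x : List α) : Prop :=
  w <:+ x ∧ ¬ w <:+: x.dropLast

theorem not_infix_dropLast_iff (x : List α) :
    ¬ w <:+: x.dropLast ↔ ¬ w <:+: x ∨ EndsWithFirstOccurrence w x := by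
  rcases x.eq_nil_or_concat' with rfl | ⟨y, a, rfl⟩
  · simp [EndsWithFirstOccurrence]
  · simp only [EndsWithFirstOccurrence, List.dropLast_concat, List.infix_concat_iff]
    tauto

theorem EndsWithFirstOccurrence.eq_of_prefix {x y : List α} (hx : EndsWithFirstOccurrence w x)
    (hy : EndsWithFirstOccurrence w y) (hxy : x <+: y) : x = y := by
  by_contra hne
  have hlt : x.length < y.length :=
    lt_of_le_of_ne hxy.length_le fun h => hne (hxy.eq_of_length h)
  have hx_dropLast : x <+: y.dropLast :=
    List.prefix_of_prefix_length_le hxy (List.dropLast_prefix y) (by simp; omega)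
  exact hy.2 (hx.1.isInfix.trans hx_dropLast.isInfix)

theorem exists_prefix_endsWithFirstOccurrence (hw : w ≠ []) {y : List α} (h : w <:+: y) :
    ∃ x, x <+: y ∧ EndsWithFirstOccurrence w x := by
  induction y using List.reverseRecOn with
  | nil => exact absurd (List.infix_nil.1 h) hw
  | append_singleton y a ih =>
    by_cases hy : w <:+: y
    · obtain ⟨x, hxy, hx⟩ := ih hy
      exact ⟨x, hxy.trans (List.prefix_append y [a]), hx⟩
    · refine ⟨y ++ [a], List.prefix_refl _, ?_, by rwa [List.dropLast_concat]⟩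
      exact (List.infix_concat_iff.1 h).resolve_right hy

theorem EndsWithFirstOccurrence.not_infix_take {x : List α} (hx : EndsWithFirstOccurrence w x)
    {m : ℕ} (hm : m < x.length) : ¬ w <:+: x.take m := fun h =>
  hx.2 <| h.trans <| List.IsPrefix.isInfix <|
    List.prefix_of_prefix_length_le (List.take_prefix m x) (List.dropLast_prefix x)
      (by simp; omega)

variable [DecidableEq α]

instance : DecidablePred (EndsWithFirstOccurrence w) :=
  fun x => inferInstanceAs (Decidable (w <:+ x ∧ ¬ w <:+: x.dropLast))

theorem occCount_eq_zero_iff (hw : w ≠ []) {x : List α} : occCount w x = 0 ↔ ¬ w <:+: x := by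
  simp only [occCount, List.length_eq_zero_iff, List.filter_eq_nil_iff, List.mem_range,
    decide_eq_true_eq]
  constructor
  · rintro h ⟨s, t, rfl⟩
    have hwlen : 0 < w.length := List.length_pos_iff.2 hw
    exact h s.length (by simp; omega) (by simp)
  · intro h i _ hi
    exact h ((List.prefix_iff_eq_take.2 hi.symm).isInfix.trans (List.drop_suffix i x).isInfix)

def periods (w : List α) : Finset ℕ :=
  (range w.length).filter fun i => w.take (w.length - i) = w.drop i

theorem mem_periods {i : ℕ} :
    i ∈ periods w ↔ i < w.length ∧ w.take (w.length - i) = w.drop i := by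
  rw [periods, mem_filter, mem_range]

theorem prefix_take_append_of_mem_periods {x : List α} {i m : ℕ} (hx : w <:+ x)
    (hi : i ∈ periods w) (hlen : x.length = m + w.length - i) : x <+: x.take m ++ w := by
  obtain ⟨hip, hperiod⟩ := mem_periods.1 hi
  have hsuf : x.drop m <:+ w :=
    List.suffix_of_suffix_length_le (List.drop_suffix m x) hx (by simp; omega)
  have htail : x.drop m = w.take (w.length - i) := by
    rw [List.suffix_iff_eq_drop, List.length_drop, show w.length - (x.length - m) = i by omega]
      at hsuf
    rwa [hperiod]
  calc x = x.take m ++ x.drop m := (List.take_append_drop m x).symm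
    _ <+: x.take m ++ w := by
      rw [htail]; exact (List.prefix_append_right_inj _).2 (List.take_prefix _ w)

theorem exists_endsWithFirstOccurrence_append (hw : w ≠ []) {u : List α} (hu : ¬ w <:+: u) :
    ∃ v, v <+: w ∧ EndsWithFirstOccurrence w (u ++ v) ∧ w.length - v.length ∈ periods w := by
  obtain ⟨x, hxu, hx⟩ :=
    exists_prefix_endsWithFirstOccurrence hw (List.suffix_append u w).isInfix
  have hux : u <+: x := by
    refine List.prefix_of_prefix_length_le (List.prefix_append u w) hxu ?_
    by_contra! hlt
    have hxu' := List.prefix_of_prefix_length_le hxu (List.prefix_append u w) hlt.le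
    exact hu (hx.1.isInfix.trans hxu'.isInfix)
  obtain ⟨v, rfl⟩ := hux
  have hv_pre : v <+: w := (List.prefix_append_right_inj u).1 hxu
  have hv_suf : v <:+ w :=
    List.suffix_of_suffix_length_le (List.suffix_append u v) hx.1 hv_pre.length_le
  have hv : v ≠ [] := by
    rintro rfl
    exact hu (by simpa using hx.1.isInfix)
  have hvlen : 0 < v.length := List.length_pos_iff.2 hv
  have hvw := hv_pre.length_le
  refine ⟨v, hv_pre, hx, mem_periods.2 ⟨by omega, ?_⟩⟩
  rw [show w.length - (w.length - v.length) = v.length by omega,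
    ← List.prefix_iff_eq_take.1 hv_pre, ← List.suffix_iff_eq_drop.1 hv_suf]

end Occurrences

section Words

variable {α : Type*} [Fintype α]

variable (α) in
def words (l : ℕ) : Finset (List α) :=
  (univ : Finset (Fin l → α)).map ⟨List.ofFn, List.ofFn_injective⟩

theorem mem_words {l : ℕ} {x : List α} : x ∈ words α l ↔ x.length = l := by
  simp only [words, mem_map, mem_univ, true_and, Function.Embedding.coeFn_mk]
  constructor
  · rintro ⟨f, rfl⟩
    exact List.length_ofFn
  · rintro rfl
    exact ⟨x.get, List.ofFn_get x⟩

theorem words_zero : words α 0 = {[]} := by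
  ext x
  simp [mem_words]

theorem card_filter_words (P : List α → Prop) [DecidablePred P] (l : ℕ) :
    #{x ∈ words α l | P x} = Fintype.card {f : Fin l → α // P (List.ofFn f)} := by
  rw [Fintype.card_subtype, words, filter_map, card_map]
  rfl

theorem card_filter_words_succ_dropLast (P : List α → Prop) [DecidablePred P] (l : ℕ) :
    #{x ∈ words α (l + 1) | P x.dropLast} = Fintype.card α * #{x ∈ words α l | P x} := by
  have hinj : Function.Injective fun ua : List α × α => ua.1 ++ [ua.2] :=
    fun _ _ h => Prod.ext_iff.2 (List.append_singleton_inj.1 h)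
  have hsnoc : {x ∈ words α (l + 1) | P x.dropLast} =
      ({x ∈ words α l | P x} ×ˢ univ).map ⟨_, hinj⟩ := by
    ext x
    simp only [mem_filter, mem_map, mem_product, mem_univ, and_true, mem_words,
      Function.Embedding.coeFn_mk, Prod.exists]
    constructor
    · rintro ⟨hlen, hP⟩
      have hx : x ≠ [] := List.ne_nil_of_length_eq_add_one hlen
      exact ⟨x.dropLast, x.getLast hx, ⟨by simp [hlen], hP⟩, List.dropLast_append_getLast hx⟩
    · rintro ⟨u, a, ⟨hlen, hP⟩, rfl⟩
      simp [hlen, hP]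
  rw [hsnoc, card_map, card_product, card_univ, mul_comm]

end Words

section Counting

variable {α : Type*} [DecidableEq α] [Fintype α] {w : List α}

theorem card_endsWithFirstOccurrence_of_lt {l : ℕ} (hl : l < w.length) :
    #{x ∈ words α l | EndsWithFirstOccurrence w x} = 0 := by
  refine card_eq_zero.2 (filter_eq_empty_iff.2 fun x hx h => ?_)
  have := h.1.length_le
  rw [mem_words.1 hx] at this
  omega

theorem card_not_infix_add_card_endsWithFirstOccurrence (l : ℕ) :
    #{x ∈ words α (l + 1) | ¬ w <:+: x} + #{x ∈ words α (l + 1) | EndsWithFirstOccurrence w x} =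
      Fintype.card α * #{x ∈ words α l | ¬ w <:+: x} := by
  have hdisj : Disjoint {x ∈ words α (l + 1) | ¬ w <:+: x}
      {x ∈ words α (l + 1) | EndsWithFirstOccurrence w x} :=
    disjoint_filter.2 fun _ _ h h' => h h'.1.isInfix
  rw [← card_union_of_disjoint hdisj, ← filter_or, ← card_filter_words_succ_dropLast]
  simp only [not_infix_dropLast_iff]

theorem card_not_infix_eq_sum_periods (hw : w ≠ []) (m : ℕ) :
    #{u ∈ words α m | ¬ w <:+: u} =
      ∑ i ∈ periods w, #{x ∈ words α (m + w.length - i) | EndsWithFirstOccurrence w x} := by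
  rw [← card_sigma]
  symm
  refine card_bij (fun ix _ => ix.2.take m) ?_ ?_ ?_
  · rintro ⟨i, x⟩ hix
    simp only [mem_sigma, mem_filter, mem_words, mem_periods] at hix ⊢
    obtain ⟨⟨hip, -⟩, hlen, hx⟩ := hix
    exact ⟨by simp; omega, hx.not_infix_take (by omega)⟩
  · rintro ⟨i, x⟩ hix ⟨j, y⟩ hjy (hxy : x.take m = y.take m)
    simp only [mem_sigma, mem_filter, mem_words] at hix hjy
    obtain ⟨hi, hxlen, hx⟩ := hix
    obtain ⟨hj, hylen, hy⟩ := hjy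
    have hx_pre := prefix_take_append_of_mem_periods hx.1 hi hxlen
    have hy_pre := prefix_take_append_of_mem_periods hy.1 hj hylen
    rw [← hxy] at hy_pre
    obtain rfl : x = y := (List.prefix_or_prefix_of_prefix hx_pre hy_pre).elim
      (hx.eq_of_prefix hy) fun h => (hy.eq_of_prefix hx h).symm
    have := (mem_periods.1 hi).1
    have := (mem_periods.1 hj).1
    obtain rfl : i = j := by omega
    rfl
  · intro u hu
    obtain ⟨hlen, hu⟩ := mem_filter.1 hu
    rw [mem_words] at hlen
    obtain ⟨v, hvw, hx, hi⟩ := exists_endsWithFirstOccurrence_append hw hu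
    refine ⟨⟨w.length - v.length, u ++ v⟩, ?_, List.take_left' hlen⟩
    have hvw := hvw.length_le
    simp only [mem_sigma, mem_filter, mem_words, List.length_append]
    exact ⟨hi, by omega, hx⟩

end Counting

section Series

variable {α : Type*} [Fintype α]

variable (α) in
noncomputable def wordSeries (P : List α → Prop) [DecidablePred P] : PowerSeries ℚ :=
  PowerSeries.mk fun l => (#{x ∈ words α l | P x} : ℚ)

variable [DecidableEq α] {w : List α}

theorem wordSeries_not_infix_add_wordSeries_endsWithFirstOccurrence (hw : w ≠ []) :
    wordSeries α (¬ w <:+: ·) + wordSeries α (EndsWithFirstOccurrence w) =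
      1 + C (Fintype.card α : ℚ) * X * wordSeries α (¬ w <:+: ·) := by
  ext (_ | l)
  · have hnil : ¬ EndsWithFirstOccurrence w [] := fun h => hw (List.suffix_nil.1 h.1)
    simp [wordSeries, words_zero, filter_singleton, hw, hnil]
  · rw [map_add, map_add, mul_assoc, coeff_C_mul, coeff_succ_X_mul, coeff_one,
      if_neg l.succ_ne_zero, zero_add]
    simp only [wordSeries, coeff_mk]
    exact_mod_cast card_not_infix_add_card_endsWithFirstOccurrence l

theorem X_pow_mul_wordSeries_not_infix (hw : w ≠ []) :
    X ^ w.length * wordSeries α (¬ w <:+: ·) =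
      (∑ i ∈ periods w, X ^ i) * wordSeries α (EndsWithFirstOccurrence w) := by
  ext n
  simp only [coeff_X_pow_mul', sum_mul, map_sum, wordSeries, coeff_mk]
  split_ifs with hn
  · obtain ⟨m, rfl⟩ : ∃ m, n = m + w.length := ⟨n - w.length, by omega⟩
    have hle : ∀ i ∈ periods w, i ≤ m + w.length := fun i hi => by
      have := (mem_periods.1 hi).1
      omega
    rw [sum_congr rfl fun i hi => if_pos (hle i hi), Nat.add_sub_cancel]
    exact_mod_cast card_not_infix_eq_sum_periods hw m
  · refine (sum_eq_zero fun i _ => ?_).symm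
    split_ifs
    · simp [card_endsWithFirstOccurrence_of_lt (show n - i < w.length by omega)]
    · rfl

end Series

theorem stmt14_general (b : ℕ) (w : List (Fin b)) (hw : 1 ≤ w.length) :
    ((1 - PowerSeries.C (b : ℚ) * X) * Aw b w + X ^ w.length) * Zser b w [] [] 0 =
      Aw b w := by
  have hw' : w ≠ [] := List.ne_nil_of_length_pos hw
  have hZ : Zser b w [] [] 0 = wordSeries (Fin b) (¬ w <:+: ·) := by
    ext l
    rw [Zser, wordSeries, coeff_mk, coeff_mk, card_filter_words, Nxy]
    congr 1
    exact Fintype.card_congr <| Equiv.subtypeEquivRight fun f => by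
      simp [occCount_eq_zero_iff hw']
  have hA : Aw b w = ∑ i ∈ periods w, X ^ i := (sum_filter _ _).symm
  have hrec := wordSeries_not_infix_add_wordSeries_endsWithFirstOccurrence (α := Fin b) hw'
  rw [Fintype.card_fin] at hrec
  rw [hZ, hA]
  linear_combination (∑ i ∈ periods w, X ^ i) * hrec + X_pow_mul_wordSeries_not_infix hw'

/-- The Guibas–Odlyzko formula `Z_w(0) = A_w / ((1 - bt) A_w + t^p)`, stated multiplied
through by the denominator. -/
theorem stmt14 (b : ℕ) (hb : 1 < b) (w : List (Fin b)) (hw : 1 ≤ w.length) :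
    ((1 - PowerSeries.C (b : ℚ) * X) * Aw b w + X ^ w.length) * Zser b w [] [] 0 =
      Aw b w :=
  stmt14_general b w hw
end
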